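/- arXiv:2603.08887 — 7 statements merged into one kernel-verified Lean document; each statement's English description precedes it below -/
import Mathlib

section
/- Let C_eff, C_drel, C_osc, θ, q be real numbers with C_eff ≥ 1, C_drel ≥ 1, C_osc ≥ 0, θ > 0, q ≥ 0, and q² ≤ (1 − C_eff²·(C_drel² + C_osc²)·θ²)/(C_eff²·(1 + C_osc²)). Let η, η̂, E, Ê, O, Ô, R be nonnegative real numbers satisfying: (i) efficiency η² ≤ C_eff²·(E² + O²); (ii) reliability Ê ≤ η̂; (iii) oscillation bound Ô ≤ C_osc·η̂; (iv) E² − Ê² ≤ C_drel²·R²; (v) O² − Ô² ≤ C_osc²·R²; (vi) estimator reduction η̂ ≤ q·η. Then θ·η ≤ R. (This is the algebraic core of the paper's lemma on p-robust optimality of Dörfler marking.) -/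
/-- Algebraic core of the lemma on p-robust optimality of Dörfler marking. -/
theorem stmt_1 (Ceff Cdrel Cosc θ q : ℝ)
    (hCeff : 1 ≤ Ceff) (hCdrel : 1 ≤ Cdrel) (hCosc : 0 ≤ Cosc) (hθ : 0 < θ) (hq0 : 0 ≤ q)
    (hq : q ^ 2 ≤ (1 - Ceff ^ 2 * (Cdrel ^ 2 + Cosc ^ 2) * θ ^ 2) / (Ceff ^ 2 * (1 + Cosc ^ 2)))
    (η η' E E' O O' R : ℝ)
    (hη : 0 ≤ η) (hη' : 0 ≤ η') (hE : 0 ≤ E) (hE' : 0 ≤ E') (hO : 0 ≤ O) (hO' : 0 ≤ O')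
    (hR : 0 ≤ R)
    (heff : η ^ 2 ≤ Ceff ^ 2 * (E ^ 2 + O ^ 2))
    (hrel : E' ≤ η')
    (hoscbnd : O' ≤ Cosc * η')
    (hdrel : E ^ 2 - E' ^ 2 ≤ Cdrel ^ 2 * R ^ 2)
    (hoscdiff : O ^ 2 - O' ^ 2 ≤ Cosc ^ 2 * R ^ 2)
    (hred : η' ≤ q * η) :
    θ * η ≤ R := by
  have hC0 : (0:ℝ) < Ceff := lt_of_lt_of_le one_pos hCeff
  have hden : (0:ℝ) < Ceff ^ 2 * (1 + Cosc ^ 2) := by positivity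
  have hq2 : q ^ 2 * (Ceff ^ 2 * (1 + Cosc ^ 2)) ≤
      1 - Ceff ^ 2 * (Cdrel ^ 2 + Cosc ^ 2) * θ ^ 2 := (le_div_iff₀ hden).mp hq
  have hE'2 : E' ^ 2 ≤ η' ^ 2 := pow_le_pow_left₀ hE' hrel 2
  have hO'2 : O' ^ 2 ≤ Cosc ^ 2 * η' ^ 2 := by nlinarith [pow_le_pow_left₀ hO' hoscbnd 2]
  have hη'2 : η' ^ 2 ≤ q ^ 2 * η ^ 2 := by nlinarith [pow_le_pow_left₀ hη' hred 2]
  have hfacpos : (0:ℝ) < Ceff ^ 2 * (Cdrel ^ 2 + Cosc ^ 2) := by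
    have h1 : (0:ℝ) < Cdrel := lt_of_lt_of_le one_pos hCdrel
    positivity
  have step1 : η ^ 2 ≤ Ceff ^ 2 * (1 + Cosc ^ 2) * η' ^ 2
      + Ceff ^ 2 * (Cdrel ^ 2 + Cosc ^ 2) * R ^ 2 := by
    linarith [mul_le_mul_of_nonneg_left hdrel (sq_nonneg Ceff),
      mul_le_mul_of_nonneg_left hoscdiff (sq_nonneg Ceff),
      mul_le_mul_of_nonneg_left hE'2 (sq_nonneg Ceff),
      mul_le_mul_of_nonneg_left hO'2 (sq_nonneg Ceff)]
  have step2 : Ceff ^ 2 * (1 + Cosc ^ 2) * η' ^ 2 ≤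
      (1 - Ceff ^ 2 * (Cdrel ^ 2 + Cosc ^ 2) * θ ^ 2) * η ^ 2 := by
    linarith [mul_le_mul_of_nonneg_left hη'2 (le_of_lt hden),
      mul_le_mul_of_nonneg_right hq2 (sq_nonneg η)]
  have step3 : Ceff ^ 2 * (Cdrel ^ 2 + Cosc ^ 2) * (θ ^ 2 * η ^ 2) ≤
      Ceff ^ 2 * (Cdrel ^ 2 + Cosc ^ 2) * R ^ 2 := by linarith [step1, step2]
  have key : θ ^ 2 * η ^ 2 ≤ R ^ 2 := le_of_mul_le_mul_left step3 hfacpos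
  have h4 : (θ * η) ^ 2 ≤ R ^ 2 := by rw [mul_pow]; exact key
  calc θ * η = Real.sqrt ((θ * η) ^ 2) := (Real.sqrt_sq (mul_nonneg hθ.le hη)).symm
    _ ≤ Real.sqrt (R ^ 2) := Real.sqrt_le_sqrt h4
    _ = R := Real.sqrt_sq hR
end

section
/- Let s > 0 and 0 < q < 1 be real numbers, let a : ℕ → ℝ satisfy a(j) > 0 and a(j+1) ≤ q·a(j) for all j ∈ ℕ, let K ≥ 0 be real, let ℓ ∈ ℕ, and let N ≥ 0 be a real number with N ≤ K·∑_{j=0}^{ℓ−1} a(j)^{−1/s}. Then N^s · a(ℓ) ≤ K^s · (1 − q^{1/s})^{−s}. (This is the counting core of the paper's optimal-convergence theorem: combining the mesh-closure bound on the cumulative number of marked vertices with error contraction yields the optimal algebraic rate.) -/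
/-! With `r = q ^ (1 / s) < 1`, the contraction `a (j + 1) ≤ q * a j` becomes
`a j ^ (-1 / s) ≤ r * a (j + 1) ^ (-1 / s)`, so the weights `a j ^ (-1 / s)` grow at least
geometrically and their partial sum up to `ℓ` is dominated by its next term:
`∑_{j < ℓ} a j ^ (-1 / s) ≤ a ℓ ^ (-1 / s) / (1 - r)`. Raising `N ≤ K / (1 - r) * a ℓ ^ (-1 / s)`
to the power `s` gives the claim. -/

open Finset

theorem sum_range_le_of_le_mul_succ {b : ℕ → ℝ} {r : ℝ} (hr0 : 0 ≤ r) (hr1 : r < 1)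
    (hb0 : ∀ j, 0 ≤ b j) (hb : ∀ j, b j ≤ r * b (j + 1)) (n : ℕ) :
    ∑ j ∈ range n, b j ≤ r / (1 - r) * b n := by
  have h1r : 0 < 1 - r := by linarith
  induction n with
  | zero => simpa using mul_nonneg (div_nonneg hr0 h1r.le) (hb0 0)
  | succ n ih =>
    calc ∑ j ∈ range (n + 1), b j ≤ r / (1 - r) * b n + b n := by
          rw [sum_range_succ]; linarith
      _ = b n / (1 - r) := by field_simp; ring
      _ ≤ r * b (n + 1) / (1 - r) := by gcongr; exact hb n
      _ = r / (1 - r) * b (n + 1) := by ring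

theorem Real.rpow_neg_le_rpow_mul_rpow_neg_of_le_mul {x y q p : ℝ} (hy : 0 < y) (hq : 0 < q)
    (hp : 0 ≤ p) (h : y ≤ q * x) : x ^ (-p) ≤ q ^ p * y ^ (-p) := by
  have hx : 0 ≤ x := nonneg_of_mul_nonneg_right (hy.le.trans h) hq
  have hqx : q ^ (-p) * x ^ (-p) ≤ y ^ (-p) := by
    rw [← Real.mul_rpow hq.le hx]
    exact Real.rpow_le_rpow_of_nonpos hy h (neg_nonpos.mpr hp)
  calc x ^ (-p) = q ^ p * (q ^ (-p) * x ^ (-p)) := by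
        rw [Real.rpow_neg hq.le, ← mul_assoc, mul_inv_cancel₀ (by positivity), one_mul]
    _ ≤ q ^ p * y ^ (-p) := by gcongr

theorem Real.rpow_mul_le_rpow_of_le_mul_rpow_neg_inv {N C x s : ℝ} (hs : 0 < s) (hN : 0 ≤ N)
    (hC : 0 ≤ C) (hx : 0 < x) (h : N ≤ C * x ^ (-(1 / s))) : N ^ s * x ≤ C ^ s := by
  have hxs : (x ^ (-(1 / s))) ^ s = x⁻¹ := by
    rw [← Real.rpow_mul hx.le, neg_mul, one_div_mul_cancel hs.ne', Real.rpow_neg_one]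
  calc N ^ s * x ≤ (C * x ^ (-(1 / s))) ^ s * x := by gcongr
    _ = C ^ s := by
        rw [Real.mul_rpow hC (by positivity), hxs, mul_assoc, inv_mul_cancel₀ hx.ne', mul_one]

/-- Counting core of the optimal-convergence theorem. -/
theorem stmt_2 (s q : ℝ) (hs : 0 < s) (hq0 : 0 < q) (hq1 : q < 1)
    (a : ℕ → ℝ) (ha : ∀ j, 0 < a j) (hcontr : ∀ j, a (j + 1) ≤ q * a j)
    (K : ℝ) (hK : 0 ≤ K) (ℓ : ℕ) (N : ℝ) (hN0 : 0 ≤ N)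
    (hN : N ≤ K * ∑ j ∈ Finset.range ℓ, a j ^ (-(1 / s))) :
    N ^ s * a ℓ ≤ K ^ s * (1 - q ^ (1 / s)) ^ (-s) := by
  set r := q ^ (1 / s)
  have hr0 : 0 ≤ r := by positivity
  have h1r : 0 < 1 - r := sub_pos.mpr (Real.rpow_lt_one hq0.le hq1 (by positivity))
  have hw : ∀ j, 0 ≤ a j ^ (-(1 / s)) := fun j => (Real.rpow_pos_of_pos (ha j) _).le
  have hsum : ∑ j ∈ range ℓ, a j ^ (-(1 / s)) ≤ 1 / (1 - r) * a ℓ ^ (-(1 / s)) := by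
    calc ∑ j ∈ range ℓ, a j ^ (-(1 / s)) ≤ r / (1 - r) * a ℓ ^ (-(1 / s)) :=
          sum_range_le_of_le_mul_succ hr0 (by linarith) hw
            (fun j => Real.rpow_neg_le_rpow_mul_rpow_neg_of_le_mul (ha _) hq0
              (by positivity) (hcontr j)) ℓ
      _ ≤ 1 / (1 - r) * a ℓ ^ (-(1 / s)) := by gcongr; exacts [hw ℓ, by linarith]
  have hNK : N ≤ K / (1 - r) * a ℓ ^ (-(1 / s)) := by
    calc N ≤ K * (1 / (1 - r) * a ℓ ^ (-(1 / s))) := hN.trans (by gcongr)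
      _ = K / (1 - r) * a ℓ ^ (-(1 / s)) := by ring
  calc N ^ s * a ℓ ≤ (K / (1 - r)) ^ s :=
        Real.rpow_mul_le_rpow_of_le_mul_rpow_neg_inv hs hN0 (by positivity) (ha ℓ) hNK
    _ = K ^ s * (1 - r) ^ (-s) := by
        rw [Real.div_rpow hK h1r.le, Real.rpow_neg h1r.le, div_eq_mul_inv]
end

section
/- Let H be a real inner product space, let A be a finite index set, let e ∈ H, let (r_a)_{a∈A} be a family of vectors in H, let (η_a)_{a∈A} be nonnegative real numbers, and let C > 0 and N > 0 be real numbers. Assume: (i) ⟨e, r_a⟩ = ‖r_a‖² for every a ∈ A; (ii) ‖∑_{a∈A} r_a‖² ≤ N·∑_{a∈A} ‖r_a‖²; and (iii) η_a ≤ C·‖r_a‖ for every a ∈ A. Then ‖e‖ ≥ (1/(N^{1/2}·C))·(∑_{a∈A} η_a²)^{1/2}. (This is the Hilbert-space core of the paper's local discrete efficiency lemma.) -/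
open scoped RealInnerProductSpace

/-- Hilbert-space core of the local discrete efficiency lemma. -/
theorem stmt_3 {H : Type*} [NormedAddCommGroup H] [InnerProductSpace ℝ H]
    {A : Type*} [Fintype A] (e : H) (r : A → H) (η : A → ℝ) (hη : ∀ a, 0 ≤ η a)
    (C N : ℝ) (hC : 0 < C) (hN : 0 < N)
    (h1 : ∀ a, ⟪e, r a⟫ = ‖r a‖ ^ 2)
    (h2 : ‖∑ a, r a‖ ^ 2 ≤ N * ∑ a, ‖r a‖ ^ 2)
    (h3 : ∀ a, η a ≤ C * ‖r a‖) :
    ‖e‖ ≥ 1 / (Real.sqrt N * C) * Real.sqrt (∑ a, η a ^ 2) := by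
  set S : ℝ := ∑ a, ‖r a‖ ^ 2 with hS
  have hS0 : 0 ≤ S := Finset.sum_nonneg fun a _ => sq_nonneg _
  have hηS : ∑ a, η a ^ 2 ≤ C ^ 2 * S := by
    rw [Finset.mul_sum]
    refine Finset.sum_le_sum fun a _ => ?_
    have := h3 a
    calc η a ^ 2 ≤ (C * ‖r a‖) ^ 2 := by
          apply pow_le_pow_left₀ (hη a) this
      _ = C ^ 2 * ‖r a‖ ^ 2 := by ring
  have hinner : ⟪e, ∑ a, r a⟫ = S := by
    rw [inner_sum, hS]
    exact Finset.sum_congr rfl fun a _ => h1 a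
  have hcs : S ≤ ‖e‖ * ‖∑ a, r a‖ := by
    rw [← hinner]; exact real_inner_le_norm _ _
  have hnorm : ‖∑ a, r a‖ ≤ Real.sqrt (N * S) := by
    exact (Real.le_sqrt (norm_nonneg _) (by positivity)).mpr h2
  have hsqrtNS : Real.sqrt (N * S) = Real.sqrt N * Real.sqrt S :=
    Real.sqrt_mul hN.le _
  have key : Real.sqrt S ≤ ‖e‖ * Real.sqrt N := by
    rcases eq_or_lt_of_le hS0 with h0 | h0
    · rw [← h0, Real.sqrt_zero]
      positivity
    · have hS' : S = Real.sqrt S * Real.sqrt S := (Real.mul_self_sqrt hS0).symm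
      have : Real.sqrt S * Real.sqrt S ≤ ‖e‖ * (Real.sqrt N * Real.sqrt S) := by
        calc Real.sqrt S * Real.sqrt S = S := Real.mul_self_sqrt hS0
          _ ≤ ‖e‖ * ‖∑ a, r a‖ := hcs
          _ ≤ ‖e‖ * Real.sqrt (N * S) := by
              exact mul_le_mul_of_nonneg_left hnorm (norm_nonneg _)
          _ = ‖e‖ * (Real.sqrt N * Real.sqrt S) := by rw [hsqrtNS]
      have hsqS : 0 < Real.sqrt S := Real.sqrt_pos.mpr h0
      nlinarith
  have hfinal : Real.sqrt (∑ a, η a ^ 2) ≤ C * Real.sqrt S := by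
    calc Real.sqrt (∑ a, η a ^ 2) ≤ Real.sqrt (C ^ 2 * S) := Real.sqrt_le_sqrt hηS
      _ = C * Real.sqrt S := by
          rw [Real.sqrt_mul (sq_nonneg C), Real.sqrt_sq hC.le]
  have hN' : 0 < Real.sqrt N := Real.sqrt_pos.mpr hN
  rw [ge_iff_le, div_mul_eq_mul_div, one_mul, div_le_iff₀ (by positivity)]
  calc Real.sqrt (∑ a, η a ^ 2) ≤ C * Real.sqrt S := hfinal
    _ ≤ C * (‖e‖ * Real.sqrt N) := mul_le_mul_of_nonneg_left key hC.le
    _ = ‖e‖ * (Real.sqrt N * C) := by ring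
end

section
/- Let H be a real Hilbert space, let V ⊆ W be complete subspaces of H, let u ∈ H, and let u_V and u_W denote the orthogonal projections of u onto V and W. Let I : W → V be a linear map, and let C ≥ 0 and η ≥ 0 be real numbers such that: (i) ‖w − I(w)‖ ≤ C·‖w‖ for all w ∈ W; and (ii) ⟨u − u_V, w − I(w)⟩ ≤ η·‖w − I(w)‖ for all w ∈ W. Then ‖u_W − u_V‖ ≤ C·η. (This is the Hilbert-space skeleton of the paper's p-robust discrete reliability lemma.) -/
open scoped RealInnerProductSpace

/-! Set `d = u_W - u_V ∈ W`. Since `u - u_W ⟂ W` and `u - u_V ⟂ V`, testing the residual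
`u - u_V` against `d - I d` gives exactly `‖d‖²`; hypotheses (ii) and (i) then bound this
by `η ‖d - I d‖ ≤ η C ‖d‖`. -/

lemma le_of_sq_le_mul_self {R : Type*} [CommRing R] [LinearOrder R] [IsStrictOrderedRing R]
    {a b : R} (hb : 0 ≤ b) (h : a ^ 2 ≤ b * a) : a ≤ b := by
  nlinarith

namespace Submodule

variable {H : Type*} [NormedAddCommGroup H] [InnerProductSpace ℝ H]
  {V W : Submodule ℝ H} [V.HasOrthogonalProjection] [W.HasOrthogonalProjection]

lemma starProjection_sub_starProjection_mem_of_le (hVW : V ≤ W) (u : H) :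
    W.starProjection u - V.starProjection u ∈ W :=
  W.sub_mem (W.starProjection_apply_mem u) (hVW (V.starProjection_apply_mem u))

lemma inner_sub_left_eq_inner_starProjection_sub (u y : H) {x : H} (hx : x ∈ W) :
    ⟪u - y, x⟫ = ⟪W.starProjection u - y, x⟫ := by
  have hsplit : u - y = (u - W.starProjection u) + (W.starProjection u - y) := by abel
  rw [hsplit, inner_add_left, W.starProjection_inner_eq_zero u x hx, zero_add]

lemma inner_sub_starProjection_eq_norm_sq_of_le (hVW : V ≤ W) (u : H) {v : H} (hv : v ∈ V) :
    ⟪u - V.starProjection u, W.starProjection u - V.starProjection u - v⟫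
      = ‖W.starProjection u - V.starProjection u‖ ^ 2 := by
  rw [inner_sub_right, V.starProjection_inner_eq_zero u v hv, sub_zero,
    inner_sub_left_eq_inner_starProjection_sub u _
      (starProjection_sub_starProjection_mem_of_le hVW u),
    real_inner_self_eq_norm_sq]

end Submodule

/-- Hilbert-space skeleton of the p-robust discrete reliability lemma. -/
theorem stmt_4 {H : Type*} [NormedAddCommGroup H] [InnerProductSpace ℝ H]
    (V W : Submodule ℝ H) [CompleteSpace V] [CompleteSpace W] (hVW : V ≤ W)
    (u : H) (I : W →ₗ[ℝ] V) (C η : ℝ) (hC : 0 ≤ C) (hη : 0 ≤ η)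
    (hstab : ∀ w : W, ‖(w : H) - (I w : H)‖ ≤ C * ‖(w : H)‖)
    (hres : ∀ w : W, ⟪u - (Submodule.orthogonalProjection V u : H), (w : H) - (I w : H)⟫
      ≤ η * ‖(w : H) - (I w : H)‖) :
    ‖(Submodule.orthogonalProjection W u : H) - (Submodule.orthogonalProjection V u : H)‖ ≤ C * η := by
  let d : W := ⟨_, Submodule.starProjection_sub_starProjection_mem_of_le hVW u⟩
  refine le_of_sq_le_mul_self (mul_nonneg hC hη) ?_
  calc ‖(d : H)‖ ^ 2 = ⟪u - V.starProjection u, (d : H) - (I d : H)⟫ :=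
        (Submodule.inner_sub_starProjection_eq_norm_sq_of_le hVW u (I d).2).symm
    _ ≤ η * ‖(d : H) - (I d : H)‖ := hres d
    _ ≤ η * (C * ‖(d : H)‖) := by gcongr; exact hstab d
    _ = C * η * ‖(d : H)‖ := by ring
end

section
/- Let (α, μ) be a measure space and let H = L²(μ; ℝ). Let V be a closed subspace of H and let P denote the orthogonal projection of H onto V. Let ψ : α → ℝ be measurable with |ψ(x)| ≤ 1 for μ-almost every x, and let g, h ∈ H be such that the pointwise product ψ·h belongs to V. Then ‖ψ·g − P(ψ·g)‖_{L²} ≤ ‖g + h‖_{L²}. (This is the key estimate in the paper's appendix showing ‖ψ_a f − Π(ψ_a f)‖_T ≤ ‖f + Δu_ℓ‖_T, with P the L²-orthogonal projection onto piecewise polynomials.) -/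
open MeasureTheory

/-! Projecting onto `V` is at least as good as subtracting the element `-(ψ·h)` of `V`, so the
left-hand side is at most `‖ψ·g + ψ·h‖ = ‖ψ·(g + h)‖`, and multiplication by a function
bounded by `1` does not increase the `L²` norm. -/

theorem Submodule.norm_sub_starProjection_le_norm_sub {𝕜 E : Type*} [RCLike 𝕜]
    [NormedAddCommGroup E] [InnerProductSpace 𝕜 E] {K : Submodule 𝕜 E}
    [K.HasOrthogonalProjection] (x : E) {v : E} (hv : v ∈ K) :
    ‖x - K.starProjection x‖ ≤ ‖x - v‖ := by
  rw [starProjection_minimal]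
  exact ciInf_le ⟨0, Set.forall_mem_range.mpr fun _ => norm_nonneg _⟩ (⟨v, hv⟩ : K)

theorem MeasureTheory.Lp.norm_le_of_ae_eq_smul {α 𝕜 E : Type*} [MeasurableSpace α]
    {μ : Measure α} {p : ENNReal} [NormedField 𝕜] [NormedAddCommGroup E] [NormedSpace 𝕜 E]
    {ψ : α → 𝕜} (hψ : ∀ᵐ x ∂μ, ‖ψ x‖ ≤ 1) {u f : Lp E p μ}
    (hu : u =ᵐ[μ] fun x => ψ x • f x) : ‖u‖ ≤ ‖f‖ := by
  refine Lp.norm_le_norm_of_ae_le ?_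
  filter_upwards [hψ, hu] with x hψx hux
  calc ‖u x‖ = ‖ψ x‖ * ‖f x‖ := by rw [hux, norm_smul]
    _ ≤ ‖f x‖ := mul_le_of_le_one_left (norm_nonneg _) hψx

theorem stmt_10_general {α : Type*} [MeasurableSpace α] (μ : Measure α)
    (V : Submodule ℝ (Lp ℝ 2 μ)) [CompleteSpace V]
    (ψ : α → ℝ) (hψ : ∀ᵐ x ∂μ, |ψ x| ≤ 1)
    (g h : Lp ℝ 2 μ)
    (hg : MemLp (fun x => ψ x * g x) 2 μ)
    (hh : MemLp (fun x => ψ x * h x) 2 μ)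
    (hhV : hh.toLp ∈ V) :
    ‖hg.toLp - (Submodule.orthogonalProjectionOnto V hg.toLp : Lp ℝ 2 μ)‖ ≤ ‖g + h‖ := by
  have hproj : ‖hg.toLp - V.starProjection hg.toLp‖ ≤ ‖hg.toLp + hh.toLp‖ := by
    simpa only [sub_neg_eq_add] using
      V.norm_sub_starProjection_le_norm_sub hg.toLp (V.neg_mem hhV)
  have hsum : hg.toLp + hh.toLp =ᵐ[μ] fun x => ψ x • (g + h) x := by
    filter_upwards [Lp.coeFn_add hg.toLp hh.toLp, hg.coeFn_toLp, hh.coeFn_toLp,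
      Lp.coeFn_add g h] with x hsum hgx hhx hgh
    rw [hsum, Pi.add_apply, hgx, hhx, hgh, Pi.add_apply, smul_eq_mul, mul_add]
  have hψ' : ∀ᵐ x ∂μ, ‖ψ x‖ ≤ 1 := hψ.mono fun x hx => by rwa [Real.norm_eq_abs]
  exact hproj.trans (Lp.norm_le_of_ae_eq_smul hψ' hsum)

/-- If `|ψ| ≤ 1` a.e. and `ψ·h` lies in the closed subspace `V` of `L²`, then the
distance of `ψ·g` to `V` is bounded by `‖g + h‖`. -/
theorem stmt_10 {α : Type*} [MeasurableSpace α] (μ : Measure α)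
    (V : Submodule ℝ (Lp ℝ 2 μ)) [CompleteSpace V]
    (ψ : α → ℝ) (hψm : Measurable ψ) (hψ : ∀ᵐ x ∂μ, |ψ x| ≤ 1)
    (g h : Lp ℝ 2 μ)
    (hg : MemLp (fun x => ψ x * g x) 2 μ)
    (hh : MemLp (fun x => ψ x * h x) 2 μ)
    (hhV : hh.toLp ∈ V) :
    ‖hg.toLp - (Submodule.orthogonalProjectionOnto V hg.toLp : Lp ℝ 2 μ)‖ ≤ ‖g + h‖ :=
  stmt_10_general μ V ψ hψ g h hg hh hhV
end

section
/- Let E be a real normed vector space, μ a measure on E, ω a measurable subset of E, and let ψ, v : E → ℝ be differentiable functions. Let L ≥ 0 and M ≥ 0 be real numbers such that for all x ∈ ω, |ψ(x)| ≤ 1 and ‖fderiv ℝ ψ x‖ ≤ L. Assume that x ↦ v(x)² and x ↦ ‖fderiv ℝ v x‖² are integrable on ω with respect to μ, and that ∫_ω v(x)² dμ ≤ M² · ∫_ω ‖fderiv ℝ v x‖² dμ. Then (∫_ω ‖fderiv ℝ (ψ·v) x‖² dμ)^{1/2} ≤ (1 + L·M) · (∫_ω ‖fderiv ℝ v x‖²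 dμ)^{1/2}. (This is the stability estimate ‖∇(ψ_a v)‖ ≤ (1 + C_PF·diam(ω_a)·‖∇ψ_a‖_∞)·‖∇v‖ on vertex patches, stated here for differentiable functions.) -/
/-!
Pointwise on `ω`, the product rule gives
`‖∇(ψ v)‖ ≤ |ψ| ‖∇v‖ + |v| ‖∇ψ‖ ≤ ‖∇v‖ + L |v|`.
Minkowski's inequality in `L²(ω)` then bounds `‖∇(ψ v)‖` by `‖∇v‖ + L ‖v‖`,
and the Poincaré–Friedrichs inequality `‖v‖ ≤ M ‖∇v‖` finishes the estimate.
-/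

open MeasureTheory

section L2

variable {α : Type*} [MeasurableSpace α] {ν : Measure α}

lemma MeasureTheory.MemLp.norm_toLp_two_eq_sqrt {f : α → ℝ} (hf : MemLp f 2 ν) :
    ‖hf.toLp f‖ = √(∫ x, f x ^ 2 ∂ν) := by
  have h_inner : inner ℝ (hf.toLp f) (hf.toLp f) = ∫ x, f x ^ 2 ∂ν := by
    rw [L2.inner_def]
    refine integral_congr_ae ?_
    filter_upwards [hf.coeFn_toLp] with x hx
    simp [hx, sq]
  rw [← h_inner, real_inner_self_eq_norm_sq, Real.sqrt_sq (norm_nonneg _)]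

lemma memLp_two_abs_of_integrable_sq {f : α → ℝ} (hf : Integrable (fun x => f x ^ 2) ν) :
    MemLp (fun x => |f x|) 2 ν := by
  have hmeas : AEStronglyMeasurable (fun x => |f x|) ν := by
    simpa only [Real.sqrt_sq_eq_abs] using
      Real.continuous_sqrt.comp_aestronglyMeasurable hf.aestronglyMeasurable
  rw [memLp_two_iff_integrable_sq hmeas]
  simpa only [sq_abs] using hf

lemma sqrt_integral_add_sq_le {a b : α → ℝ} (ha : MemLp a 2 ν) (hb : MemLp b 2 ν) :
    √(∫ x, (a x + b x) ^ 2 ∂ν) ≤ √(∫ x, a x ^ 2 ∂ν) + √(∫ x, b x ^ 2 ∂ν) := by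
  rw [← ha.norm_toLp_two_eq_sqrt, ← hb.norm_toLp_two_eq_sqrt]
  have hab : ‖(ha.add hb).toLp (a + b)‖ = √(∫ x, (a x + b x) ^ 2 ∂ν) :=
    (ha.add hb).norm_toLp_two_eq_sqrt
  rw [← hab, MemLp.toLp_add ha hb]
  exact norm_add_le _ _

lemma sqrt_integral_sq_le_of_abs_le_add {h a b : α → ℝ} (ha : MemLp a 2 ν) (hb : MemLp b 2 ν)
    (hle : ∀ᵐ x ∂ν, |h x| ≤ a x + b x) :
    √(∫ x, h x ^ 2 ∂ν) ≤ √(∫ x, a x ^ 2 ∂ν) + √(∫ x, b x ^ 2 ∂ν) := by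
  have h_sq_le : ∀ᵐ x ∂ν, h x ^ 2 ≤ (a x + b x) ^ 2 := by
    filter_upwards [hle] with x hx
    simpa only [sq_abs] using pow_le_pow_left₀ (abs_nonneg _) hx 2
  have h_int_le : ∫ x, h x ^ 2 ∂ν ≤ ∫ x, (a x + b x) ^ 2 ∂ν :=
    integral_mono_of_nonneg (.of_forall fun x => sq_nonneg _) (ha.add hb).integrable_sq
      h_sq_le
  exact (Real.sqrt_le_sqrt h_int_le).trans (sqrt_integral_add_sq_le ha hb)

lemma sqrt_integral_sq_const_mul_abs_le {v : α → ℝ} {L M I : ℝ} (hL : 0 ≤ L) (hM : 0 ≤ M)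
    (hv : ∫ x, v x ^ 2 ∂ν ≤ M ^ 2 * I) :
    √(∫ x, (L * |v x|) ^ 2 ∂ν) ≤ L * M * √I := by
  have h_eq : ∫ x, (L * |v x|) ^ 2 ∂ν = L ^ 2 * ∫ x, v x ^ 2 ∂ν := by
    rw [← integral_const_mul]
    simp only [mul_pow, sq_abs]
  have h_le : L ^ 2 * ∫ x, v x ^ 2 ∂ν ≤ (L * M) ^ 2 * I := by
    rw [mul_pow, mul_assoc]
    exact mul_le_mul_of_nonneg_left hv (sq_nonneg L)
  rw [h_eq]
  calc √(L ^ 2 * ∫ x, v x ^ 2 ∂ν) ≤ √((L * M) ^ 2 * I) := Real.sqrt_le_sqrt h_le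
    _ = L * M * √I := by
      rw [Real.sqrt_mul (sq_nonneg _), Real.sqrt_sq (mul_nonneg hL hM)]

end L2

lemma norm_fderiv_mul_le {E : Type*} [NormedAddCommGroup E] [NormedSpace ℝ E]
    {ψ v : E → ℝ} {x : E} (hψ : DifferentiableAt ℝ ψ x) (hv : DifferentiableAt ℝ v x) :
    ‖fderiv ℝ (fun y => ψ y * v y) x‖ ≤ |ψ x| * ‖fderiv ℝ v x‖ + |v x| * ‖fderiv ℝ ψ x‖ := by
  rw [fderiv_fun_mul hψ hv]
  refine (norm_add_le _ _).trans ?_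
  simp only [norm_smul, Real.norm_eq_abs, le_refl]

/-- Stability estimate `‖∇(ψ v)‖ ≤ (1 + L·M)·‖∇v‖` on a patch, for differentiable
functions, given a Poincaré–Friedrichs inequality with constant `M`. -/
theorem stmt_12 {E : Type*} [NormedAddCommGroup E] [NormedSpace ℝ E] [MeasurableSpace E]
    (μ : Measure E) (ω : Set E) (hω : MeasurableSet ω)
    (ψ v : E → ℝ) (hψ : Differentiable ℝ ψ) (hv : Differentiable ℝ v)
    (L M : ℝ) (hL : 0 ≤ L) (hM : 0 ≤ M)
    (hψ1 : ∀ x ∈ ω, |ψ x| ≤ 1) (hψL : ∀ x ∈ ω, ‖fderiv ℝ ψ x‖ ≤ L)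
    (hv2 : IntegrableOn (fun x => v x ^ 2) ω μ)
    (hdv2 : IntegrableOn (fun x => ‖fderiv ℝ v x‖ ^ 2) ω μ)
    (hPF : ∫ x in ω, v x ^ 2 ∂μ ≤ M ^ 2 * ∫ x in ω, ‖fderiv ℝ v x‖ ^ 2 ∂μ) :
    Real.sqrt (∫ x in ω, ‖fderiv ℝ (fun y => ψ y * v y) x‖ ^ 2 ∂μ)
      ≤ (1 + L * M) * Real.sqrt (∫ x in ω, ‖fderiv ℝ v x‖ ^ 2 ∂μ) := by
  have hDv : MemLp (fun x => ‖fderiv ℝ v x‖) 2 (μ.restrict ω) := by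
    simpa only [abs_norm] using memLp_two_abs_of_integrable_sq hdv2
  have hLv : MemLp (fun x => L * |v x|) 2 (μ.restrict ω) :=
    (memLp_two_abs_of_integrable_sq hv2).const_mul L
  have h_pointwise : ∀ x ∈ ω,
      |‖fderiv ℝ (fun y => ψ y * v y) x‖| ≤ ‖fderiv ℝ v x‖ + L * |v x| := by
    intro x hx
    rw [abs_norm]
    refine (norm_fderiv_mul_le (hψ x) (hv x)).trans (add_le_add ?_ ?_)
    · exact (mul_le_mul_of_nonneg_right (hψ1 x hx) (norm_nonneg _)).trans_eq (one_mul _)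
    · exact (mul_le_mul_of_nonneg_left (hψL x hx) (abs_nonneg _)).trans_eq (mul_comm _ _)
  set N := √(∫ x in ω, ‖fderiv ℝ v x‖ ^ 2 ∂μ)
  calc √(∫ x in ω, ‖fderiv ℝ (fun y => ψ y * v y) x‖ ^ 2 ∂μ)
      ≤ N + √(∫ x in ω, (L * |v x|) ^ 2 ∂μ) :=
        sqrt_integral_sq_le_of_abs_le_add hDv hLv
          ((ae_restrict_iff' hω).2 (.of_forall h_pointwise))
    _ ≤ N + L * M * N := by
        gcongr
        exact sqrt_integral_sq_const_mul_abs_le hL hM hPF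
    _ = (1 + L * M) * N := by ring
end

section
/- Let C ≥ 1 be a real number, let N : ℕ → ℕ be monotone nondecreasing and unbounded with N(ℓ+1) ≤ C·N(ℓ) for all ℓ, let a : ℕ → ℝ be nonnegative and nonincreasing, let s > 0, and let M ≥ 0 be a real number such that (N(ℓ) − N(0) + 1)^s · a(ℓ) ≤ M for all ℓ ∈ ℕ. Then for every K ∈ ℕ there exists ℓ ∈ ℕ with N(ℓ) − N(0) ≤ K and (K + 1)^s · a(ℓ) ≤ (C + (C − 1)·N(0))^s · M. (This is the counting argument, based on the child estimate #T_{ℓ+1} ≤ C_child·#T_ℓ, underlying the first inequality c_opt·‖u‖_{A_s} ≤ sup_ℓ [(#T_ℓ − #T_0 + 1)^s·‖∇(u − u_ℓ)‖] in the paper's optimal-convergence theorem.) -/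
/-- Counting argument based on the child estimate: the adaptive sequence realizes
every prescribed element budget `K` up to the constant `(C + (C-1)·N(0))^s`. -/
theorem stmt_14 (C : ℝ) (hC : 1 ≤ C) (N : ℕ → ℕ) (hmono : Monotone N)
    (hunb : ∀ m : ℕ, ∃ ℓ : ℕ, m ≤ N ℓ)
    (hchild : ∀ ℓ : ℕ, (N (ℓ + 1) : ℝ) ≤ C * N ℓ)
    (a : ℕ → ℝ) (ha0 : ∀ ℓ, 0 ≤ a ℓ) (hanti : Antitone a)
    (s : ℝ) (hs : 0 < s) (M : ℝ) (hM : 0 ≤ M)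
    (hrate : ∀ ℓ : ℕ, ((N ℓ - N 0 + 1 : ℕ) : ℝ) ^ s * a ℓ ≤ M) :
    ∀ K : ℕ, ∃ ℓ : ℕ, N ℓ - N 0 ≤ K ∧
      ((K + 1 : ℕ) : ℝ) ^ s * a ℓ ≤ (C + (C - 1) * N 0) ^ s * M := by
  intro K
  -- find the least index where N exceeds N 0 + K
  have hex : ∃ ℓ, N 0 + K < N ℓ := by
    obtain ⟨ℓ, hℓ⟩ := hunb (N 0 + K + 1)
    exact ⟨ℓ, by omega⟩
  classical
  let m := Nat.find hex
  have hmspec : N 0 + K < N m := Nat.find_spec hex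
  have hm0 : m ≠ 0 := by
    intro h
    have := hmspec
    rw [h] at this
    omega
  obtain ⟨ℓ, hm⟩ : ∃ ℓ, m = ℓ + 1 := ⟨m - 1, by omega⟩
  rw [hm] at hmspec
  have hℓle : ¬ (N 0 + K < N ℓ) := Nat.find_min hex (show ℓ < m by omega)
  have hN0ℓ : N 0 ≤ N ℓ := hmono (Nat.zero_le ℓ)
  refine ⟨ℓ, by omega, ?_⟩
  -- key numeric inequality: K + 1 ≤ (C + (C-1) * N 0) * (N ℓ - N 0 + 1)
  have hCnn : (0:ℝ) ≤ C - 1 := by linarith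
  have hN0nn : (0:ℝ) ≤ (N 0 : ℝ) := Nat.cast_nonneg _
  have hdnn : (0:ℝ) ≤ (N ℓ : ℝ) - N 0 := by
    have : (N 0 : ℝ) ≤ N ℓ := Nat.cast_le.mpr hN0ℓ
    linarith
  have hkey : ((K + 1 : ℕ) : ℝ) ≤ (C + (C - 1) * N 0) * (((N ℓ - N 0 + 1 : ℕ)) : ℝ) := by
    have h1 : ((K + 1 : ℕ) : ℝ) ≤ (N (ℓ + 1) : ℝ) - N 0 := by
      push_cast
      have : (N 0 : ℝ) + K + 1 ≤ N (ℓ + 1) := by exact_mod_cast (by omega : N 0 + K + 1 ≤ N (ℓ+1))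
      linarith
    have h2 : (N (ℓ + 1) : ℝ) - N 0 ≤ C * N ℓ - N 0 := by
      have := hchild ℓ
      linarith
    have hcast : (((N ℓ - N 0 + 1 : ℕ)) : ℝ) = (N ℓ : ℝ) - N 0 + 1 := by
      push_cast [Nat.cast_sub hN0ℓ]
      ring
    rw [hcast]
    have expand : (C + (C - 1) * N 0) * ((N ℓ : ℝ) - N 0 + 1)
        = C * N ℓ - N 0 + C + (C - 1) * N 0 * ((N ℓ : ℝ) - N 0) := by ring
    have : (0:ℝ) ≤ (C - 1) * N 0 * ((N ℓ : ℝ) - N 0) :=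
      mul_nonneg (mul_nonneg hCnn hN0nn) hdnn
    nlinarith
  have hKpos : (0:ℝ) ≤ ((K + 1 : ℕ) : ℝ) := Nat.cast_nonneg _
  have hCN0 : (0:ℝ) ≤ C + (C - 1) * N 0 := by nlinarith
  calc ((K + 1 : ℕ) : ℝ) ^ s * a ℓ
      ≤ ((C + (C - 1) * N 0) * (((N ℓ - N 0 + 1 : ℕ)) : ℝ)) ^ s * a ℓ := by
        exact mul_le_mul_of_nonneg_right
          (Real.rpow_le_rpow hKpos hkey hs.le) (ha0 ℓ)
    _ = (C + (C - 1) * N 0) ^ s * ((((N ℓ - N 0 + 1 : ℕ)) : ℝ) ^ s * a ℓ) := by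
        rw [Real.mul_rpow hCN0 (Nat.cast_nonneg _), mul_assoc]
    _ ≤ (C + (C - 1) * N 0) ^ s * M := by
        exact mul_le_mul_of_nonneg_left (hrate ℓ) (Real.rpow_nonneg hCN0 s)
end
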